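/- arXiv:2211.03757 — 2 statements merged into one kernel-verified Lean document; each statement's English description precedes it below -/
import Mathlib

section
/- Let $\tilde{p}$ and $\hat{\tilde{p}}$ be probability distributions on a finite set $B \cup \{\bot\}$ with $\tilde{p}(\bot) < 1$ and $\hat{\tilde{p}}(\bot) < 1$. Define $\bar{p}(x) = \tilde{p}(x)/(1 - \tilde{p}(\bot))$ and $\hat{p}(x) = \hat{\tilde{p}}(x)/(1 - \hat{\tilde{p}}(\bot))$ for $x \in B$, which are probability distributions on $B$. Then $\sum_{x \in B} |\hat{p}(x) - \bar{p}(x)| \le \frac{1}{1 - \tilde{p}(\bot)}\left(|\hat{\tilde{p}}(\bot) - \tilde{p}(\bot)| + \sum_{x \in B} |\hat{\tilde{p}}(x) - \tilde{p}(x)|\right)$. -/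
open Finset

/-!
Write `a = 1 - tpb` and `b = 1 - htpb` for the masses off `⊥`. Pointwise,
`q/b - p/a = ((q - p) + (q/b)(a - b))/a`; summing the absolute values and using that `q/b`
sums to `1` gives the bound, since `|a - b| = |htpb - tpb|`.
-/

lemma abs_div_sub_div_le {p q a b : ℝ} (hq : 0 ≤ q) (ha : 0 < a) (hb : 0 < b) :
    |q / b - p / a| ≤ (|q - p| + q / b * |b - a|) / a := by
  have hsplit : q / b - p / a = ((q - p) + q / b * (a - b)) / a := by
    field_simp
    ring
  rw [hsplit, abs_div, abs_of_pos ha, abs_sub_comm b a]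
  gcongr
  refine (abs_add_le _ _).trans_eq ?_
  rw [abs_mul, abs_of_nonneg (div_nonneg hq hb.le)]

lemma sum_abs_div_sub_div_le {α : Type*} {s : Finset α} {p q : α → ℝ} {a b : ℝ}
    (hq : ∀ x ∈ s, 0 ≤ q x) (hq_sum : ∑ x ∈ s, q x = b) (ha : 0 < a) (hb : 0 < b) :
    ∑ x ∈ s, |q x / b - p x / a| ≤ (|b - a| + ∑ x ∈ s, |q x - p x|) / a := by
  have hnormalized : ∑ x ∈ s, q x / b = 1 := by
    rw [← sum_div, hq_sum, div_self hb.ne']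
  calc ∑ x ∈ s, |q x / b - p x / a|
      ≤ ∑ x ∈ s, (|q x - p x| + q x / b * |b - a|) / a :=
        sum_le_sum fun x hx => abs_div_sub_div_le (hq x hx) ha hb
    _ = (|b - a| + ∑ x ∈ s, |q x - p x|) / a := by
        rw [← sum_div, sum_add_distrib, ← sum_mul, hnormalized, one_mul, add_comm]

theorem conditional_l1_bound_general {α : Type*} (B : Finset α)
    (tp htp : α → ℝ) (tpb htpb : ℝ)
    (htpb_lt : tpb < 1)
    (hhtp_nn : ∀ x ∈ B, 0 ≤ htp x)
    (hhtp_sum : (∑ x ∈ B, htp x) + htpb = 1) (hhtpb_lt : htpb < 1) :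
    ∑ x ∈ B, |htp x / (1 - htpb) - tp x / (1 - tpb)|
      ≤ (1 / (1 - tpb)) * (|htpb - tpb| + ∑ x ∈ B, |htp x - tp x|) := by
  have hmass : ∑ x ∈ B, htp x = 1 - htpb := by linarith
  have hgap : |(1 - htpb) - (1 - tpb)| = |htpb - tpb| := by
    rw [sub_sub_sub_cancel_left, abs_sub_comm]
  rw [one_div_mul_eq_div, ← hgap]
  exact sum_abs_div_sub_div_le hhtp_nn hmass (by linarith) (by linarith)

/-- ℓ₁ error of conditional (renormalized) distributions: if `tp, htp` are probability
distributions on `B ∪ {⊥}` (with `⊥`-masses `tpb, htpb < 1`), and `barp, hp` are the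
renormalized conditional distributions on `B`, then
`∑_{x ∈ B} |hp x - barp x| ≤ (|htpb - tpb| + ∑_{x ∈ B} |htp x - tp x|) / (1 - tpb)`. -/
theorem conditional_l1_bound {α : Type*} (B : Finset α)
    (tp htp : α → ℝ) (tpb htpb : ℝ)
    (htp_nn : ∀ x ∈ B, 0 ≤ tp x) (htpb_nn : 0 ≤ tpb)
    (htp_sum : (∑ x ∈ B, tp x) + tpb = 1) (htpb_lt : tpb < 1)
    (hhtp_nn : ∀ x ∈ B, 0 ≤ htp x) (hhtpb_nn : 0 ≤ htpb)
    (hhtp_sum : (∑ x ∈ B, htp x) + htpb = 1) (hhtpb_lt : htpb < 1) :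
    ∑ x ∈ B, |htp x / (1 - htpb) - tp x / (1 - tpb)|
      ≤ (1 / (1 - tpb)) * (|htpb - tpb| + ∑ x ∈ B, |htp x - tp x|) :=
  conditional_l1_bound_general B tp htp tpb htpb htpb_lt hhtp_nn hhtp_sum hhtpb_lt
end

section
/- Let $X$ be a random variable and $Y = (Y_1, Y_2)$ be obtained by passing $X$ through two conditionally independent channels $W_1$ and $W_2$, where $Y_1 \in \{0,1\}$ is binary and $W_2$ satisfies $\varepsilon$-local differential privacy (i.e., for all $x, x', y_2$: $W_2(y_2 \mid x) \le e^{\varepsilon} W_2(y_2 \mid x')$). Then the mutual information satisfies $I(X; Y_1, Y_2) \le \varepsilon \log_2 e + 1$ bits. -/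
open Finset Real

/-!
Let `q` be the law of `Y₁` and `P(y₁, y₂) = ∑ₓ p(x) W₁(y₁|x) W₂(y₂|x)` the joint law of the outputs.
Since `P(y₁, ·)` is a mixture of rows of `W₂` with total weight `q(y₁)`, the `ε`-LDP property gives
`W₂(y₂|x) q(y₁) ≤ e^ε P(y₁, y₂)`, and with `W₁ ≤ 1` every information density is bounded by
`log₂ (W₁ W₂ / P) ≤ ε log₂ e - log₂ q(y₁)`. Averaging, `I(X; Y₁, Y₂) ≤ ε log₂ e + H(Y₁)`,
and a binary variable has entropy at most one bit.
-/

theorem mul_sum_le_exp_mul_sum_of_ldp {ι κ : Type*} (s : Finset ι) {w : ι → ℝ}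
    {W : ι → κ → ℝ} {ε : ℝ} (hw : ∀ i ∈ s, 0 ≤ w i)
    (hldp : ∀ x x' y, W x y ≤ exp ε * W x' y) (x : ι) (y : κ) :
    W x y * ∑ i ∈ s, w i ≤ exp ε * ∑ i ∈ s, w i * W i y := by
  rw [mul_sum, mul_sum]
  refine sum_le_sum fun i hi => ?_
  calc W x y * w i ≤ exp ε * W i y * w i := mul_le_mul_of_nonneg_right (hldp x i y) (hw i hi)
    _ = exp ε * (w i * W i y) := by ring

theorem logb_mul_div_le_sub_logb {u v q D ε : ℝ} (hu : 0 < u) (hu₁ : u ≤ 1) (hv : 0 < v)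
    (hq : 0 < q) (hD : 0 < D) (h : v * q ≤ exp ε * D) :
    logb 2 (u * v / D) ≤ ε * logb 2 (exp 1) - logb 2 q := by
  have hle : u * v / D ≤ exp ε / q := by
    rw [div_le_div_iff₀ hD hq]
    calc u * v * q = u * (v * q) := mul_assoc u v q
      _ ≤ v * q := mul_le_of_le_one_left (by positivity) hu₁
      _ ≤ exp ε * D := h
  calc logb 2 (u * v / D) ≤ logb 2 (exp ε / q) :=
        logb_le_logb_of_le one_lt_two (by positivity) hle
    _ = ε * logb 2 (exp 1) - logb 2 q := by
        rw [logb_div (exp_pos ε).ne' hq.ne']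
        simp only [logb, log_exp]
        ring

theorem sum_neg_mul_logb_le_one {q : Fin 2 → ℝ} (hq : ∑ y, q y = 1) :
    ∑ y, -(q y * logb 2 (q y)) ≤ 1 := by
  rw [Fin.sum_univ_two] at hq
  have hentropy : ∑ y, -(q y * logb 2 (q y)) = binEntropy (q 0) / log 2 := by
    rw [binEntropy_eq_negMulLog_add_negMulLog_one_sub, ← hq, add_sub_cancel_left,
      Fin.sum_univ_two]
    simp only [negMulLog, logb]
    ring
  rw [hentropy, div_le_one (log_pos one_lt_two)]
  exact binEntropy_le_log_two

section TwoChannels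

variable {ι κ₁ κ₂ : Type*} [Fintype ι] {px : ι → ℝ} {W1 : ι → κ₁ → ℝ} {W2 : ι → κ₂ → ℝ}

theorem sum_sum_mul_eq_one [Fintype κ₁] (hpx_sum : ∑ x, px x = 1)
    (hW1_sum : ∀ x, ∑ y, W1 x y = 1) : ∑ y, ∑ x, px x * W1 x y = 1 := by
  rw [sum_comm]
  simp only [← mul_sum, hW1_sum, mul_one, hpx_sum]

theorem sum_sum_sum_mul_eq_sum_marginal_mul [Fintype κ₁] [Fintype κ₂]
    (hW2_sum : ∀ x, ∑ y, W2 x y = 1) (f : κ₁ → ℝ) :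
    ∑ x, ∑ y1, ∑ y2, px x * W1 x y1 * W2 x y2 * f y1 = ∑ y1, (∑ x, px x * W1 x y1) * f y1 := by
  have hW2_out : ∀ x y1, ∑ y2, px x * W1 x y1 * W2 x y2 * f y1 = px x * W1 x y1 * f y1 :=
    fun x y1 => by rw [← sum_mul, ← mul_sum, hW2_sum, mul_one]
  simp only [hW2_out, sum_mul]
  exact sum_comm

theorem mul_logb_joint_ratio_le {ε : ℝ} (hpx_nn : ∀ x, 0 ≤ px x) (hW1_nn : ∀ x y, 0 ≤ W1 x y)
    (hW1_le : ∀ x y, W1 x y ≤ 1) (hW2_nn : ∀ x y, 0 ≤ W2 x y)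
    (hldp : ∀ x x' y2, W2 x y2 ≤ exp ε * W2 x' y2) (x : ι) (y1 : κ₁) (y2 : κ₂) :
    px x * W1 x y1 * W2 x y2 *
        logb 2 (W1 x y1 * W2 x y2 / ∑ x', px x' * W1 x' y1 * W2 x' y2)
      ≤ px x * W1 x y1 * W2 x y2 * (ε * logb 2 (exp 1) - logb 2 (∑ x', px x' * W1 x' y1)) := by
  rcases (hpx_nn x).eq_or_lt with h | hpx; · simp [← h]
  rcases (hW1_nn x y1).eq_or_lt with h | hW1; · simp [← h]
  rcases (hW2_nn x y2).eq_or_lt with h | hW2; · simp [← h]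
  have hq : 0 < ∑ x', px x' * W1 x' y1 :=
    sum_pos' (fun i _ => mul_nonneg (hpx_nn i) (hW1_nn i y1)) ⟨x, mem_univ x, by positivity⟩
  have hD : 0 < ∑ x', px x' * W1 x' y1 * W2 x' y2 :=
    sum_pos' (fun i _ => mul_nonneg (mul_nonneg (hpx_nn i) (hW1_nn i y1)) (hW2_nn i y2))
      ⟨x, mem_univ x, by positivity⟩
  refine mul_le_mul_of_nonneg_left (logb_mul_div_le_sub_logb hW1 (hW1_le x y1) hW2 hq hD ?_)
    (by positivity)
  exact mul_sum_le_exp_mul_sum_of_ldp univ (fun i _ => mul_nonneg (hpx_nn i) (hW1_nn i y1))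
    hldp x y2

end TwoChannels

theorem mutual_info_ldp_plus_bit_general (a b : ℕ) (ε : ℝ)
    (px : Fin a → ℝ) (W1 : Fin a → Fin 2 → ℝ) (W2 : Fin a → Fin b → ℝ)
    (hpx_nn : ∀ x, 0 ≤ px x) (hpx_sum : ∑ x, px x = 1)
    (hW1_nn : ∀ x y, 0 ≤ W1 x y) (hW1_sum : ∀ x, ∑ y, W1 x y = 1)
    (hW2_nn : ∀ x y, 0 ≤ W2 x y) (hW2_sum : ∀ x, ∑ y, W2 x y = 1)
    (hldp : ∀ x x' y2, W2 x y2 ≤ Real.exp ε * W2 x' y2) :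
    ∑ x, ∑ y1, ∑ y2,
        px x * W1 x y1 * W2 x y2 *
          Real.logb 2 ((W1 x y1 * W2 x y2) / ∑ x', px x' * W1 x' y1 * W2 x' y2)
      ≤ ε * Real.logb 2 (Real.exp 1) + 1 := by
  set q : Fin 2 → ℝ := fun y1 => ∑ x, px x * W1 x y1
  have hq_sum : ∑ y1, q y1 = 1 := sum_sum_mul_eq_one hpx_sum hW1_sum
  have hW1_le : ∀ x y, W1 x y ≤ 1 := fun x y =>
    hW1_sum x ▸ single_le_sum (fun y' _ => hW1_nn x y') (mem_univ y)
  calc _ ≤ ∑ x, ∑ y1, ∑ y2, px x * W1 x y1 * W2 x y2 * (ε * logb 2 (exp 1) - logb 2 (q y1)) :=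
        sum_le_sum fun x _ => sum_le_sum fun y1 _ => sum_le_sum fun y2 _ =>
          mul_logb_joint_ratio_le hpx_nn hW1_nn hW1_le hW2_nn hldp x y1 y2
    _ = ∑ y1, q y1 * (ε * logb 2 (exp 1) - logb 2 (q y1)) :=
        sum_sum_sum_mul_eq_sum_marginal_mul hW2_sum _
    _ = ε * logb 2 (exp 1) + ∑ y1, -(q y1 * logb 2 (q y1)) := by
        rw [sum_neg_distrib, ← sub_eq_add_neg]
        simp only [mul_sub, sum_sub_distrib, ← sum_mul, hq_sum, one_mul]
    _ ≤ ε * logb 2 (exp 1) + 1 := by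
        gcongr
        exact sum_neg_mul_logb_le_one hq_sum

/-- Mutual information bound for `ε`-LDP + 1-bit channels. If `X ∼ px` (on a finite alphabet)
and `Y = (Y₁, Y₂)` is obtained via two conditionally independent channels, where `Y₁` is binary
and `W₂` satisfies `ε`-LDP, then `I(X; Y₁, Y₂) ≤ ε log₂ e + 1` bits. -/
theorem mutual_info_ldp_plus_bit (a b : ℕ) (ε : ℝ) (hε : 0 ≤ ε)
    (px : Fin a → ℝ) (W1 : Fin a → Fin 2 → ℝ) (W2 : Fin a → Fin b → ℝ)
    (hpx_nn : ∀ x, 0 ≤ px x) (hpx_sum : ∑ x, px x = 1)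
    (hW1_nn : ∀ x y, 0 ≤ W1 x y) (hW1_sum : ∀ x, ∑ y, W1 x y = 1)
    (hW2_nn : ∀ x y, 0 ≤ W2 x y) (hW2_sum : ∀ x, ∑ y, W2 x y = 1)
    (hldp : ∀ x x' y2, W2 x y2 ≤ Real.exp ε * W2 x' y2) :
    ∑ x, ∑ y1, ∑ y2,
        px x * W1 x y1 * W2 x y2 *
          Real.logb 2 ((W1 x y1 * W2 x y2) / ∑ x', px x' * W1 x' y1 * W2 x' y2)
      ≤ ε * Real.logb 2 (Real.exp 1) + 1 :=
  mutual_info_ldp_plus_bit_general a b ε px W1 W2 hpx_nn hpx_sum hW1_nn hW1_sum hW2_nn hW2_sum hldp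
end
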